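/- arXiv:2011.10516 — 7 statements merged into one kernel-verified Lean document; each statement's English description precedes it below -/
import Mathlib

section
/- Let P be a symmetric positive semidefinite d×d matrix, H a q×d matrix, R a symmetric positive definite q×q matrix, and define the Kalman gain K(P) = P Hᵀ (R + H P Hᵀ)^{-1}. Then (Id - K(P)H) P = P^{1/2} (Id + P^{1/2} Hᵀ R^{-1} H P^{1/2})^{-1} P^{1/2}. -/
/-! With `P = S * S` and `A = R + H P Hᵀ`, one checks directly that `H S M = A R⁻¹ H S` for
`M = 1 + S Hᵀ R⁻¹ H S`, from which `(1 - K H) S M = S`. The matrix `M` is invertible because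
Sylvester's determinant identity gives `det M = det (1 + H P Hᵀ R⁻¹) = det A · det R⁻¹`. -/

open Matrix

open scoped ComplexOrder in
/-- The positive semidefinite square root of a positive semidefinite matrix
(the definition `Matrix.PosSemidef.sqrt` of the older Mathlib, since removed). -/
noncomputable def Matrix.PosSemidef.sqrt {n : Type*} [Fintype n] [DecidableEq n] {𝕜 : Type*}
    [RCLike 𝕜] {A : Matrix n n 𝕜} (hA : A.PosSemidef) : Matrix n n 𝕜 :=
  hA.1.eigenvectorUnitary.1 * diagonal ((↑) ∘ (√·) ∘ hA.1.eigenvalues) *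
  (star hA.1.eigenvectorUnitary : Matrix n n 𝕜)

namespace Matrix

variable {m n α : Type*} [Fintype m] [Fintype n] [DecidableEq m] [DecidableEq n] [CommRing α]

theorem isUnit_det_one_add_mul_inv_mul_mul {S : Matrix n n α} {G : Matrix n m α}
    {H : Matrix m n α} {R : Matrix m m α} (hR : IsUnit R.det)
    (hA : IsUnit (R + H * (S * S) * G).det) :
    IsUnit (1 + S * G * R⁻¹ * H * S).det := by
  have hsylvester : (1 + S * G * R⁻¹ * H * S).det = (R + H * (S * S) * G).det * R⁻¹.det := by
    rw [show S * G * R⁻¹ * H * S = (S * G * R⁻¹) * (H * S) by simp only [Matrix.mul_assoc],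
      det_one_add_mul_comm, ← det_mul, Matrix.add_mul, mul_nonsing_inv _ hR]
    simp only [Matrix.mul_assoc]
  rw [hsylvester]
  exact hA.mul (isUnit_nonsing_inv_det_iff.mpr hR)

theorem one_sub_gain_mul_mul_one_add {S : Matrix n n α} {G : Matrix n m α}
    {H : Matrix m n α} {R : Matrix m m α} (hR : IsUnit R.det)
    (hA : IsUnit (R + H * (S * S) * G).det) :
    (1 - S * S * G * (R + H * (S * S) * G)⁻¹ * H) * S * (1 + S * G * R⁻¹ * H * S) = S := by
  set A := R + H * (S * S) * G
  have hintertwine : H * S * (1 + S * G * R⁻¹ * H * S) = A * (R⁻¹ * H * S) := by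
    simp only [A, Matrix.add_mul, ← Matrix.mul_assoc, mul_nonsing_inv _ hR, Matrix.one_mul,
      Matrix.mul_add, Matrix.mul_one]
  calc (1 - S * S * G * A⁻¹ * H) * S * (1 + S * G * R⁻¹ * H * S)
      = S * (1 + S * G * R⁻¹ * H * S) - S * S * G * A⁻¹ * (H * S * (1 + S * G * R⁻¹ * H * S)) := by
        simp only [Matrix.sub_mul, Matrix.one_mul, Matrix.mul_assoc]
    _ = S := by
        rw [hintertwine, ← Matrix.mul_assoc (S * S * G * A⁻¹), Matrix.mul_assoc _ A⁻¹,
          nonsing_inv_mul _ hA]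
        simp only [Matrix.mul_add, Matrix.mul_one, Matrix.mul_assoc]
        abel

theorem one_sub_gain_mul_mul_self_eq {S : Matrix n n α} {G : Matrix n m α}
    {H : Matrix m n α} {R : Matrix m m α} (hR : IsUnit R.det)
    (hA : IsUnit (R + H * (S * S) * G).det) :
    (1 - S * S * G * (R + H * (S * S) * G)⁻¹ * H) * (S * S) =
      S * (1 + S * G * R⁻¹ * H * S)⁻¹ * S := by
  set M := 1 + S * G * R⁻¹ * H * S
  have hM : M * M⁻¹ = 1 := mul_nonsing_inv _ (isUnit_det_one_add_mul_inv_mul_mul hR hA)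
  calc (1 - S * S * G * (R + H * (S * S) * G)⁻¹ * H) * (S * S)
      = (1 - S * S * G * (R + H * (S * S) * G)⁻¹ * H) * S * M * M⁻¹ * S := by
        rw [Matrix.mul_assoc _ M, hM, Matrix.mul_one]
        simp only [Matrix.mul_assoc]
    _ = S * M⁻¹ * S := by rw [one_sub_gain_mul_mul_one_add hR hA]

open scoped ComplexOrder in
theorem PosSemidef.sqrt_mul_self {𝕜 : Type*} [RCLike 𝕜] {A : Matrix n n 𝕜}
    (hA : A.PosSemidef) : hA.sqrt * hA.sqrt = A := by
  set U : Matrix n n 𝕜 := (hA.1.eigenvectorUnitary : Matrix n n 𝕜)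
  set D : Matrix n n 𝕜 := diagonal ((↑) ∘ (√·) ∘ hA.1.eigenvalues)
  have hU : star U * U = 1 := Unitary.coe_star_mul_self _
  have hD : D * D = diagonal ((↑) ∘ hA.1.eigenvalues) := by
    rw [diagonal_mul_diagonal]
    congr 1
    funext i
    simp [← RCLike.ofReal_mul, Real.mul_self_sqrt (hA.eigenvalues_nonneg i)]
  conv_rhs => rw [hA.1.spectral_theorem, Unitary.conjStarAlgAut_apply]
  calc hA.sqrt * hA.sqrt = U * D * (star U * U) * D * star U := by
        simp only [PosSemidef.sqrt, U, D, Matrix.mul_assoc]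
    _ = _ := by rw [hU, Matrix.mul_one, Matrix.mul_assoc _ D D, hD]

end Matrix

/-- With Kalman gain `K(P) = P Hᵀ (R + H P Hᵀ)⁻¹` one has
`(Id - K(P) H) P = P^{1/2} (Id + P^{1/2} Hᵀ R⁻¹ H P^{1/2})⁻¹ P^{1/2}`. -/
theorem stmt_3 {d q : ℕ} (P : Matrix (Fin d) (Fin d) ℝ) (hP : P.PosSemidef)
    (H : Matrix (Fin q) (Fin d) ℝ) (R : Matrix (Fin q) (Fin q) ℝ) (hR : R.PosDef) :
    (1 - (P * Hᵀ * (R + H * P * Hᵀ)⁻¹) * H) * P =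
      hP.sqrt * (1 + hP.sqrt * Hᵀ * R⁻¹ * H * hP.sqrt)⁻¹ * hP.sqrt := by
  have hA : (R + H * P * Hᵀ).PosDef := by
    rw [← conjTranspose_eq_transpose_of_trivial]
    exact hR.add_posSemidef (hP.mul_mul_conjTranspose_same H)
  have hgain := one_sub_gain_mul_mul_self_eq (S := hP.sqrt) (G := Hᵀ) hR.det_pos.ne'.isUnit
    (by rw [hP.sqrt_mul_self]; exact hA.det_pos.ne'.isUnit)
  rwa [hP.sqrt_mul_self] at hgain
end

section
/- Let E be a d×M real matrix, H a q×d matrix, R a symmetric positive definite q×q matrix, and P = E Eᵀ. Then E (Id_M + Eᵀ Hᵀ R^{-1} H E)^{-1} Eᵀ = (Id_d - K(P) H) P, where K(P) = P Hᵀ (R + H P Hᵀ)^{-1}. -/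
/-!
The Woodbury identity with `A = 1`, `U = Eᵀ Hᵀ`, `C = R⁻¹`, `V = H E` gives
`(1 + Eᵀ Hᵀ R⁻¹ H E)⁻¹ = 1 - Eᵀ Hᵀ (R + H P Hᵀ)⁻¹ H E`; conjugating by `E` turns the right-hand
side into `P - P Hᵀ (R + H P Hᵀ)⁻¹ H P`. Woodbury only needs `R` and `R + H P Hᵀ` to be
invertible, and both are positive definite.
-/

open Matrix

namespace Matrix

theorem PosDef.add_mul_mul_transpose {n p : Type*} [Fintype n] [Fintype p]
    {R : Matrix p p ℝ} (hR : R.PosDef) (H : Matrix p n ℝ) {P : Matrix n n ℝ}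
    (hP : P.PosSemidef) : (R + H * P * Hᵀ).PosDef := by
  simpa using hR.add_posSemidef (hP.mul_mul_conjTranspose_same H)

variable {α : Type*} [CommRing α] {m n p : Type*} [Fintype m] [DecidableEq m]
  [Fintype n] [DecidableEq n] [Fintype p] [DecidableEq p]

theorem mul_inv_one_add_mul_mul_eq (E : Matrix n m α) (F : Matrix m n α) (G : Matrix n p α)
    (H : Matrix p n α) (R : Matrix p p α) (hR : IsUnit R) (hS : IsUnit (R + H * (E * F) * G)) :
    E * (1 + F * G * R⁻¹ * H * E)⁻¹ * F =
      (1 - E * F * G * (R + H * (E * F) * G)⁻¹ * H) * (E * F) := by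
  have hS' : R⁻¹⁻¹ + H * E * (1 : Matrix m m α)⁻¹ * (F * G) = R + H * (E * F) * G := by
    rw [nonsing_inv_nonsing_inv R ((isUnit_iff_isUnit_det R).1 hR), inv_one]
    simp only [Matrix.mul_one, Matrix.mul_assoc]
  have woodbury := add_mul_mul_inv_eq_sub 1 (F * G) R⁻¹ (H * E) isUnit_one
    (isUnit_nonsing_inv_iff.2 hR) (hS' ▸ hS)
  rw [hS', inv_one, Matrix.one_mul, Matrix.mul_one] at woodbury
  rw [Matrix.mul_assoc (F * G * R⁻¹), woodbury]
  simp only [Matrix.mul_sub, Matrix.sub_mul, Matrix.mul_one, Matrix.one_mul, Matrix.mul_assoc]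

end Matrix

/-- With `P = E Eᵀ` and `K(P) = P Hᵀ (R + H P Hᵀ)⁻¹` one has
`E (Id_M + Eᵀ Hᵀ R⁻¹ H E)⁻¹ Eᵀ = (Id_d - K(P) H) P`. -/
theorem stmt_4 {d q M : ℕ} (E : Matrix (Fin d) (Fin M) ℝ)
    (H : Matrix (Fin q) (Fin d) ℝ) (R : Matrix (Fin q) (Fin q) ℝ) (hR : R.PosDef)
    (P : Matrix (Fin d) (Fin d) ℝ) (hP : P = E * Eᵀ) :
    E * (1 + Eᵀ * Hᵀ * R⁻¹ * H * E)⁻¹ * Eᵀ =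
      (1 - (P * Hᵀ * (R + H * P * Hᵀ)⁻¹) * H) * P := by
  have hPsd : P.PosSemidef := by simpa [hP] using posSemidef_self_mul_conjTranspose E
  subst hP
  exact mul_inv_one_add_mul_mul_eq E Eᵀ Hᵀ H R hR.isUnit (hR.add_mul_mul_transpose H hPsd).isUnit
end

section
/- For any symmetric positive semidefinite d×d matrix P and t ≥ 0, with Θ = Hᵀ R^{-1} H for a q×d matrix H and symmetric positive definite q×q matrix R, the spectral norm satisfies ‖e^{-tPΘ} - Id‖ ≤ t ‖P‖ ‖Θ‖. -/
open Matrix NormedSpace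
open scoped Matrix.Norms.L2Operator

/-!
Write `Q = √P`. Since `(PΘ)ⁿ P = Q (QΘQ)ⁿ Q`, we get `e^{-sPΘ} P = Q e^{-sQΘQ} Q`, and `QΘQ ≥ 0`
makes the middle factor a contraction, so `‖e^{-sPΘ} P‖ ≤ ‖Q‖² = ‖P‖`. Hence the derivative
`-e^{-sPΘ} PΘ` of `s ↦ e^{-sPΘ}` has norm at most `‖P‖ ‖Θ‖` on `[0, t]`, and the mean value
inequality concludes. Everything except the final step works in any real C⋆-algebra with an
isometric continuous functional calculus.
-/

theorem exp_mul_mul_eq_mul_exp_mul {𝔸 : Type*} [NormedRing 𝔸] [NormedAlgebra ℚ 𝔸]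
    [CompleteSpace 𝔸] (a b : 𝔸) : exp (a * b) * a = a * exp (b * a) :=
  (SemiconjBy.exp_right (mul_assoc a b a).symm).symm

theorem norm_exp_smul_sub_one_le {𝔸 : Type*} [NormedRing 𝔸] [NormedAlgebra ℝ 𝔸] [CompleteSpace 𝔸]
    {m : 𝔸} {t C : ℝ} (ht : 0 ≤ t) (hC : ∀ s ∈ Set.Icc 0 t, ‖exp (s • m) * m‖ ≤ C) :
    ‖exp (t • m) - 1‖ ≤ t * C := by
  have hderiv (s : ℝ) (_ : s ∈ Set.Icc 0 t) :
      HasDerivWithinAt (fun u : ℝ ↦ exp (u • m)) (exp (s • m) * m) (Set.Icc 0 t) s :=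
    (hasDerivAt_exp_smul_const m s).hasDerivWithinAt
  have := (convex_Icc 0 t).norm_image_sub_le_of_norm_hasDerivWithin_le hderiv hC
    (Set.left_mem_Icc.mpr ht) (Set.right_mem_Icc.mpr ht)
  rwa [zero_smul, exp_zero, sub_zero, Real.norm_of_nonneg ht, mul_comm] at this

section

variable {A : Type*} [NormedRing A] [StarRing A] [NormedAlgebra ℝ A]
  [PartialOrder A] [StarOrderedRing A] [IsometricContinuousFunctionalCalculus ℝ A IsSelfAdjoint]
  [NonnegSpectrumClass ℝ A]

theorem norm_exp_neg_le_one {a : A} (ha : 0 ≤ a) : ‖exp (-a)‖ ≤ 1 := by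
  rw [← CFC.real_exp_eq_normedSpace_exp ha.isSelfAdjoint.neg, ← cfc_comp_neg Real.exp a]
  refine norm_cfc_le zero_le_one fun x hx ↦ ?_
  rw [Real.norm_of_nonneg (Real.exp_pos _).le, Real.exp_le_one_iff]
  linarith [spectrum_nonneg_of_nonneg ha hx]

variable [CompleteSpace A] [CStarRing A] [PosSMulMono ℝ A]

theorem norm_exp_neg_smul_mul_mul_le {p θ : A} (hp : 0 ≤ p) (hθ : 0 ≤ θ) {s : ℝ} (hs : 0 ≤ s) :
    ‖exp (-(s • (p * θ))) * p‖ ≤ ‖p‖ := by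
  set q := CFC.sqrt p
  have hq : q * q = p := CFC.sqrt_mul_sqrt_self p
  have hq_sa : star q = q := (CFC.sqrt_nonneg p).isSelfAdjoint
  have hconj : exp (-(s • (p * θ))) * p = q * exp (-(s • (star q * θ * q))) * q := by
    have hleft : -(s • (q * q * θ)) = q * -(s • (q * θ)) := by
      rw [mul_neg, mul_smul_comm, mul_assoc]
    have hright : -(s • (q * θ * q)) = -(s • (q * θ)) * q := by
      rw [neg_mul, smul_mul_assoc]
    let +nondep : NormedAlgebra ℚ A := .restrictScalars ℚ ℝ A
    rw [hq_sa, ← hq, hleft, hright, ← mul_assoc, exp_mul_mul_eq_mul_exp_mul]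
  have hnonneg : 0 ≤ s • (star q * θ * q) := smul_nonneg hs (star_left_conjugate_nonneg hθ q)
  calc ‖exp (-(s • (p * θ))) * p‖
      ≤ ‖q‖ * ‖exp (-(s • (star q * θ * q)))‖ * ‖q‖ := by
        rw [hconj]; exact norm_mul₃_le
    _ ≤ ‖q‖ * 1 * ‖q‖ := by gcongr; exact norm_exp_neg_le_one hnonneg
    _ = ‖p‖ := by rw [mul_one, ← CStarRing.norm_star_mul_self, hq_sa, hq]

theorem norm_exp_neg_smul_mul_sub_one_le {p θ : A} (hp : 0 ≤ p) (hθ : 0 ≤ θ) {t : ℝ}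
    (ht : 0 ≤ t) :
    ‖exp (-(t • (p * θ))) - 1‖ ≤ t * ‖p‖ * ‖θ‖ := by
  rw [← smul_neg, mul_assoc]
  refine norm_exp_smul_sub_one_le ht fun s hs ↦ ?_
  calc ‖exp (s • -(p * θ)) * -(p * θ)‖ = ‖exp (-(s • (p * θ))) * p * θ‖ := by
        rw [smul_neg, mul_neg, norm_neg, mul_assoc]
    _ ≤ ‖exp (-(s • (p * θ))) * p‖ * ‖θ‖ := norm_mul_le _ _
    _ ≤ ‖p‖ * ‖θ‖ := by gcongr; exact norm_exp_neg_smul_mul_mul_le hp hθ hs.1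

end

/-- With `Θ = Hᵀ R⁻¹ H`, the spectral norm satisfies `‖e^{-tPΘ} - Id‖ ≤ t ‖P‖ ‖Θ‖`
for every symmetric positive semidefinite `P` and `t ≥ 0`. -/
theorem stmt_7 {d q : ℕ} (P : Matrix (Fin d) (Fin d) ℝ) (hP : P.PosSemidef)
    (H : Matrix (Fin q) (Fin d) ℝ) (R : Matrix (Fin q) (Fin q) ℝ) (hR : R.PosDef)
    (Θ : Matrix (Fin d) (Fin d) ℝ) (hΘ : Θ = Hᵀ * R⁻¹ * H)
    (t : ℝ) (ht : 0 ≤ t) :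
    ‖exp (-(t • (P * Θ))) - 1‖ ≤ t * ‖P‖ * ‖Θ‖ := by
  have hΘ_psd : Θ.PosSemidef := by
    simpa [hΘ] using hR.inv.posSemidef.conjTranspose_mul_mul_same H
  open MatrixOrder in
  exact norm_exp_neg_smul_mul_sub_one_le hP.nonneg hΘ_psd.nonneg ht
end

section
/- Define T(P) = (1/√π) ∫₀^∞ t^{-1/2} e^{-t} e^{-tPΘ} dt for symmetric positive semidefinite d×d matrices P, where Θ = Hᵀ R^{-1} H is symmetric positive semidefinite. Then ‖T(P)‖ ≤ 1 + (1/2)‖Θ‖‖P‖ in spectral norm. -/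
/-
Write `A = PΘ` and `S = √P`. Since `S · SΘS = A · S`, the exponentials intertwine:
`S e^{-u SΘS} = e^{-uA} S`, so the derivative `A e^{-uA} = S e^{-u SΘS} (SΘ)` of `u ↦ e^{-uA}` has
norm at most `‖S‖² ‖Θ‖ = ‖P‖ ‖Θ‖`, because `SΘS ≥ 0` makes `‖e^{-u SΘS}‖ ≤ 1`. Hence
`‖e^{-tA}‖ ≤ 1 + t ‖P‖ ‖Θ‖`, and averaging against the `Γ(1/2)` density `t^{-1/2} e^{-t} / √π`,
whose mean is `Γ(3/2) / Γ(1/2) = 1/2`, gives the bound.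
-/

open Matrix NormedSpace MeasureTheory Set
open scoped Matrix.Norms.L2Operator

section CStarRing

variable {A : Type*} [NormedRing A] [StarRing A] [NormedAlgebra ℝ A] [StarModule ℝ A]
  [PartialOrder A] [StarOrderedRing A]
  [IsometricContinuousFunctionalCalculus ℝ A IsSelfAdjoint] [NonnegSpectrumClass ℝ A]

lemma norm_exp_neg_smul_le_one {a : A} (ha : 0 ≤ a) {t : ℝ} (ht : 0 ≤ t) :
    ‖exp (-(t • a))‖ ≤ 1 := by
  have h : exp (-(t • a)) = cfc (fun x => Real.exp (-(t * x))) a := by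
    rw [cfc_comp' Real.exp (fun x => -(t * x)) a, cfc_neg,
      cfc_const_mul_id t a ha.isSelfAdjoint, CFC.real_exp_eq_normedSpace_exp]
  rw [h]
  refine norm_cfc_le zero_le_one fun x hx => ?_
  rw [Real.norm_of_nonneg (Real.exp_nonneg _), Real.exp_le_one_iff, neg_nonpos]
  exact mul_nonneg ht (spectrum_nonneg_of_nonneg ha hx)

variable [CStarRing A] [CompleteSpace A]

lemma norm_mul_exp_neg_smul_mul_le {a b : A} (ha : 0 ≤ a) (hb : 0 ≤ b) {u : ℝ} (hu : 0 ≤ u) :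
    ‖a * b * exp (-(u • (a * b)))‖ ≤ ‖a‖ * ‖b‖ := by
  set s := CFC.sqrt a
  have hss : s * s = a := CFC.sqrt_mul_sqrt_self a ha
  have hs : star s = s := (CFC.sqrt_nonneg a).isSelfAdjoint
  have hsb : 0 ≤ s * b * s := by simpa [hs] using star_left_conjugate_nonneg hb s
  have hsemiconj : s * exp (-(u • (s * b * s))) = exp (-(u • (a * b))) * s := by
    -- `SemiconjBy.exp_right` is stated for normed `ℚ`-algebras.
    let := NormedAlgebra.restrictScalars ℚ ℝ A
    exact SemiconjBy.exp_right (by simp only [SemiconjBy, mul_neg, neg_mul, mul_smul_comm,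
      smul_mul_assoc, ← hss, mul_assoc])
  have hnorm_s : ‖s‖ * ‖s‖ = ‖a‖ := by rw [← CStarRing.norm_star_mul_self, hs, hss]
  have hrw : a * b * exp (-(u • (a * b))) = s * exp (-(u • (s * b * s))) * (s * b) := by
    rw [((Commute.refl (a * b)).smul_right u).neg_right.exp_right.eq, hsemiconj, ← hss]
    noncomm_ring
  calc ‖a * b * exp (-(u • (a * b)))‖
      ≤ ‖s‖ * ‖exp (-(u • (s * b * s)))‖ * (‖s‖ * ‖b‖) := by
        rw [hrw]
        refine (norm_mul_le _ _).trans (mul_le_mul (norm_mul_le _ _) (norm_mul_le _ _)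
          (norm_nonneg _) (by positivity))
    _ ≤ ‖s‖ * 1 * (‖s‖ * ‖b‖) := by
        gcongr
        exact norm_exp_neg_smul_le_one hsb hu
    _ = ‖a‖ * ‖b‖ := by rw [← hnorm_s]; ring

lemma norm_exp_neg_smul_mul_le {a b : A} (ha : 0 ≤ a) (hb : 0 ≤ b) {t : ℝ} (ht : 0 ≤ t) :
    ‖exp (-(t • (a * b)))‖ ≤ 1 + ‖a‖ * ‖b‖ * t := by
  have hderiv : ∀ u ∈ Icc 0 t, HasDerivWithinAt (fun v : ℝ => exp (v • -(a * b)))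
      (-(a * b) * exp (u • -(a * b))) (Icc 0 t) u :=
    fun u _ => (hasDerivAt_exp_smul_const' _ u).hasDerivWithinAt
  have hbound : ∀ u ∈ Icc 0 t, ‖-(a * b) * exp (u • -(a * b))‖ ≤ ‖a‖ * ‖b‖ := fun u hu => by
    simpa only [smul_neg, neg_mul, norm_neg] using norm_mul_exp_neg_smul_mul_le ha hb hu.1
  have hmvt := (convex_Icc 0 t).norm_image_sub_le_of_norm_hasDerivWithin_le hderiv hbound
    (left_mem_Icc.mpr ht) (right_mem_Icc.mpr ht)
  simp only [zero_smul, smul_neg, neg_zero, NormedSpace.exp_zero, sub_zero,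
    Real.norm_of_nonneg ht] at hmvt
  have hone : ‖(1 : A)‖ ≤ 1 := by
    nontriviality A
    exact CStarRing.norm_one.le
  calc ‖exp (-(t • (a * b)))‖ ≤ ‖(1 : A)‖ + ‖exp (-(t • (a * b))) - 1‖ :=
        norm_le_norm_add_norm_sub' _ _
    _ ≤ 1 + ‖a‖ * ‖b‖ * t := add_le_add hone hmvt

end CStarRing

section GammaHalfWeight

variable {E : Type*} [NormedAddCommGroup E] [NormedSpace ℝ E]

lemma integrableOn_sqrt_inv_mul_exp_neg_and_integral_eq :
    IntegrableOn (fun t => (√t)⁻¹ * Real.exp (-t)) (Ioi 0) ∧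
      ∫ t in Ioi (0 : ℝ), (√t)⁻¹ * Real.exp (-t) = √Real.pi := by
  have h : EqOn (fun t => Real.exp (-t) * t ^ ((1 : ℝ) / 2 - 1))
      (fun t => (√t)⁻¹ * Real.exp (-t)) (Ioi 0) := fun t (ht : 0 < t) => by
    dsimp only
    rw [Real.sqrt_eq_rpow, ← Real.rpow_neg ht.le]; norm_num [mul_comm]
  refine ⟨(Real.GammaIntegral_convergent one_half_pos).congr_fun h measurableSet_Ioi, ?_⟩
  rw [← setIntegral_congr_fun measurableSet_Ioi h, ← Real.Gamma_eq_integral one_half_pos,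
    Real.Gamma_one_half_eq]

lemma integrableOn_sqrt_inv_mul_exp_neg_mul_self_and_integral_eq :
    IntegrableOn (fun t => (√t)⁻¹ * Real.exp (-t) * t) (Ioi 0) ∧
      ∫ t in Ioi (0 : ℝ), (√t)⁻¹ * Real.exp (-t) * t = √Real.pi / 2 := by
  have h : EqOn (fun t => Real.exp (-t) * t ^ ((3 : ℝ) / 2 - 1))
      (fun t => (√t)⁻¹ * Real.exp (-t) * t) (Ioi 0) := fun t (ht : 0 < t) => by
    dsimp only
    rw [show (3 : ℝ) / 2 - 1 = 1 / 2 by norm_num, ← Real.sqrt_eq_rpow]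
    field_simp
    rw [Real.sq_sqrt ht.le]
  refine ⟨(Real.GammaIntegral_convergent (by norm_num)).congr_fun h measurableSet_Ioi, ?_⟩
  rw [← setIntegral_congr_fun measurableSet_Ioi h, ← Real.Gamma_eq_integral (by norm_num),
    show (3 : ℝ) / 2 = 1 / 2 + 1 by norm_num, Real.Gamma_add_one one_half_pos.ne',
    Real.Gamma_one_half_eq]
  ring

lemma norm_integral_sqrt_inv_mul_exp_neg_smul_le {F : ℝ → E} {c : ℝ}
    (hF : ∀ t > 0, ‖F t‖ ≤ 1 + c * t) :
    ‖∫ t in Ioi (0 : ℝ), ((√t)⁻¹ * Real.exp (-t)) • F t‖ ≤ √Real.pi * (1 + c / 2) := by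
  obtain ⟨hint₀, hval₀⟩ := integrableOn_sqrt_inv_mul_exp_neg_and_integral_eq
  obtain ⟨hint₁, hval₁⟩ := integrableOn_sqrt_inv_mul_exp_neg_mul_self_and_integral_eq
  have hbound : ∀ t ∈ Ioi (0 : ℝ), ‖((√t)⁻¹ * Real.exp (-t)) • F t‖ ≤
      (√t)⁻¹ * Real.exp (-t) + c * ((√t)⁻¹ * Real.exp (-t) * t) := fun t (ht : 0 < t) => by
    rw [norm_smul, Real.norm_of_nonneg (by positivity)]
    nlinarith [hF t ht, show 0 ≤ (√t)⁻¹ * Real.exp (-t) by positivity]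
  calc _ ≤ ∫ t in Ioi (0 : ℝ), ((√t)⁻¹ * Real.exp (-t) + c * ((√t)⁻¹ * Real.exp (-t) * t)) :=
        norm_integral_le_of_norm_le (hint₀.add (hint₁.const_mul c))
          (ae_restrict_of_forall_mem measurableSet_Ioi hbound)
    _ = √Real.pi * (1 + c / 2) := by
        rw [integral_add hint₀ (hint₁.const_mul c), integral_const_mul, hval₀, hval₁]
        ring

end GammaHalfWeight

/-- With `T(P) = (1/√π) ∫₀^∞ t^{-1/2} e^{-t} e^{-tPΘ} dt` and `Θ = Hᵀ R⁻¹ H`,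
one has `‖T(P)‖ ≤ 1 + (1/2) ‖Θ‖ ‖P‖` in spectral norm. -/
theorem stmt_8 {d q : ℕ} (P : Matrix (Fin d) (Fin d) ℝ) (hP : P.PosSemidef)
    (H : Matrix (Fin q) (Fin d) ℝ) (R : Matrix (Fin q) (Fin q) ℝ) (hR : R.PosDef)
    (Θ : Matrix (Fin d) (Fin d) ℝ) (hΘ : Θ = Hᵀ * R⁻¹ * H) :
    ‖(Real.sqrt Real.pi)⁻¹ •
        ∫ t in Set.Ioi (0 : ℝ),
          ((Real.sqrt t)⁻¹ * Real.exp (-t)) • exp (-(t • (P * Θ)))‖ ≤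
      1 + (1 / 2) * ‖Θ‖ * ‖P‖ := by
  have hΘ_psd : Θ.PosSemidef := by
    rw [hΘ, ← conjTranspose_eq_transpose_of_trivial]
    exact hR.posSemidef.inv.conjTranspose_mul_mul_same H
  have hbound : ∀ t > 0, ‖exp (-(t • (P * Θ)))‖ ≤ 1 + ‖P‖ * ‖Θ‖ * t := fun t ht => by
    open scoped MatrixOrder in
    exact norm_exp_neg_smul_mul_le hP.nonneg hΘ_psd.nonneg ht.le
  have hpi : 0 < √Real.pi := Real.sqrt_pos.mpr Real.pi_pos
  rw [norm_smul, norm_inv, Real.norm_of_nonneg hpi.le]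
  calc _ ≤ (√Real.pi)⁻¹ * (√Real.pi * (1 + ‖P‖ * ‖Θ‖ / 2)) := by
        gcongr
        exact norm_integral_sqrt_inv_mul_exp_neg_smul_le hbound
    _ = 1 + (1 / 2) * ‖Θ‖ * ‖P‖ := by field_simp
end

section
/- Lipschitz-type estimate for the square-root transformation: with T(P) = (1/√π) ∫₀^∞ t^{-1/2} e^{-t} e^{-tPΘ} dt and Θ = Hᵀ R^{-1} H symmetric positive semidefinite, there exists a constant C (depending only on Θ) such that ‖T(P) - T(Q)‖ ≤ C (1 + ‖P‖² + ‖Q‖²)(1 + ‖Θ‖³) ‖P - Q‖ for all symmetric positive semidefinite P, Q. -/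
/-!
Duhamel's formula bounds `‖exp (-t P Θ) - exp (-t Q Θ)‖` by
`t (1 + t ‖P‖ ‖Θ‖) ‖P - Q‖ ‖Θ‖`. Both factors come from `‖Θ exp (-u P Θ)‖ ≤ ‖Θ‖`, which holds
because `Θ exp (-u P Θ) = √Θ exp (-u √Θ P √Θ) √Θ` and `exp (-u M)` is a contraction for positive
semidefinite `M`. Integrating this bound against `t^{-1/2} e^{-t}` leaves the finite integrals
`Γ(3/2)` and `Γ(5/2)`.
-/

open Matrix NormedSpace MeasureTheory Set
open scoped Matrix.Norms.L2Operator RealInnerProductSpace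

section BanachAlgebra

variable {𝔸 : Type*} [NormedRing 𝔸] [NormedAlgebra ℝ 𝔸] [CompleteSpace 𝔸]

theorem mul_exp_mul_comm (a b : 𝔸) : a * exp (b * a) = exp (a * b) * a :=
  letI : NormedAlgebra ℚ 𝔸 := NormedAlgebra.restrictScalars ℚ ℝ 𝔸
  (SemiconjBy.exp_right (by simp [SemiconjBy, mul_assoc])).eq

theorem norm_exp_smul_sub_one_le_s10 {A : 𝔸} {s β : ℝ} (hs : 0 ≤ s)
    (hA : ∀ u ∈ Icc 0 s, ‖A * exp (u • A)‖ ≤ β) : ‖exp (s • A) - 1‖ ≤ β * s := by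
  simpa using norm_image_sub_le_of_norm_deriv_le_segment'
    (fun u _ ↦ (hasDerivAt_exp_smul_const' (𝕂 := ℝ) A u).hasDerivWithinAt)
    (fun u hu ↦ hA u (Ico_subset_Icc_self hu)) s (right_mem_Icc.2 hs)

/-- Mean value inequality for Duhamel's interpolation `s ↦ exp (s • A) * exp ((t - s) • B)`. -/
theorem norm_exp_smul_sub_exp_smul_le {A B : 𝔸} {t α β : ℝ} (ht : 0 ≤ t)
    (hA : ∀ s ∈ Icc 0 t, ‖exp (s • A)‖ ≤ α)
    (hB : ∀ s ∈ Icc 0 t, ‖(A - B) * exp (s • B)‖ ≤ β) :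
    ‖exp (t • A) - exp (t • B)‖ ≤ α * β * t := by
  have hderiv (s : ℝ) : HasDerivAt (fun s : ℝ ↦ exp (s • A) * exp ((t - s) • B))
      (exp (s • A) * ((A - B) * exp ((t - s) • B))) s := by
    have hB' : HasDerivAt (fun s : ℝ ↦ exp ((t - s) • B)) (-(B * exp ((t - s) • B))) s := by
      simpa [Function.comp_def] using (hasDerivAt_exp_smul_const' (𝕂 := ℝ) B (t - s)).scomp s
        ((hasDerivAt_id s).const_sub t)
    convert (hasDerivAt_exp_smul_const (𝕂 := ℝ) A s).fun_mul hB' using 1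
    rw [sub_mul, mul_sub, mul_neg, mul_assoc, sub_eq_add_neg]
  have hbound : ∀ s ∈ Ico 0 t, ‖exp (s • A) * ((A - B) * exp ((t - s) • B))‖ ≤ α * β := by
    intro s ⟨hs0, hst⟩
    have hα := hA s ⟨hs0, hst.le⟩
    calc _ ≤ ‖exp (s • A)‖ * ‖(A - B) * exp ((t - s) • B)‖ := norm_mul_le _ _
      _ ≤ α * β := mul_le_mul hα (hB (t - s) ⟨by linarith, by linarith⟩) (norm_nonneg _)
          ((norm_nonneg _).trans hα)
  simpa using norm_image_sub_le_of_norm_deriv_le_segment'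
    (fun s _ ↦ (hderiv s).hasDerivWithinAt) hbound t (right_mem_Icc.2 ht)

end BanachAlgebra

namespace ContinuousLinearMap

variable {E : Type*} [NormedAddCommGroup E] [InnerProductSpace ℝ E] [CompleteSpace E]

/-- `u ↦ ‖exp (-u M) x‖²` is antitone: its derivative is `-2 ⟪M y, y⟫ ≤ 0`. -/
theorem norm_exp_neg_smul_apply_le {M : E →L[ℝ] E} (hM : ∀ x, 0 ≤ ⟪M x, x⟫) {u : ℝ}
    (hu : 0 ≤ u) (x : E) : ‖exp (u • -M) x‖ ≤ ‖x‖ := by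
  set y : ℝ → E := fun v ↦ exp (v • -M) x
  have hy (v : ℝ) : HasDerivAt y (-M (y v)) v := by
    simpa [y] using (hasDerivAt_exp_smul_const' (𝕂 := ℝ) (-M) v).clm_apply (hasDerivAt_const v x)
  have hanti : Antitone (‖y ·‖ ^ 2) := antitone_of_hasDerivAt_nonpos (fun v ↦ (hy v).norm_sq)
    fun v ↦ by simpa [real_inner_comm] using hM (y v)
  have h := hanti hu
  simp only [y, zero_smul, exp_zero] at h
  exact (pow_le_pow_iff_left₀ (norm_nonneg _) (norm_nonneg _) two_ne_zero).1 h

theorem norm_exp_neg_smul_le_one {M : E →L[ℝ] E} (hM : ∀ x, 0 ≤ ⟪M x, x⟫) {u : ℝ}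
    (hu : 0 ≤ u) : ‖exp (u • -M)‖ ≤ 1 :=
  opNorm_le_bound _ zero_le_one fun x ↦ by simpa using norm_exp_neg_smul_apply_le hM hu x

end ContinuousLinearMap

namespace Matrix

variable {n : Type*} [Fintype n] [DecidableEq n]

theorem l2_opNorm_one_le {𝕜 : Type*} [RCLike 𝕜] : ‖(1 : Matrix n n 𝕜)‖ ≤ 1 := by
  rw [cstar_norm_def, map_one]
  exact ContinuousLinearMap.norm_id_le

theorem PosSemidef.norm_exp_neg_smul_le_one {M : Matrix n n ℝ} (hM : M.PosSemidef) {u : ℝ}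
    (hu : 0 ≤ u) : ‖exp (u • -M)‖ ≤ 1 := by
  have hcont : Continuous (toEuclideanCLM (n := n) (𝕜 := ℝ)) :=
    AddMonoidHomClass.continuous_of_bound _ 1 fun A ↦ by rw [one_mul, cstar_norm_def]
  rw [cstar_norm_def, map_exp_of_mem_ball (𝕂 := ℝ) _ hcont _
    ((expSeries_radius_eq_top ℝ (Matrix n n ℝ)).symm ▸ edist_lt_top _ _), map_smul, map_neg]
  refine ContinuousLinearMap.norm_exp_neg_smul_le_one (fun x ↦ ?_) hu
  simpa [real_inner_comm, inner_toEuclideanCLM] using hM.dotProduct_mulVec_nonneg x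

/-- Writing `Θ = W²` with `W = √Θ`, `Θ exp (-u P Θ) = W exp (-u W P W) W` and `W P W` is again
positive semidefinite. -/
theorem PosSemidef.norm_mul_exp_neg_smul_mul_le {P Θ : Matrix n n ℝ} (hP : P.PosSemidef)
    (hΘ : Θ.PosSemidef) {u : ℝ} (hu : 0 ≤ u) : ‖Θ * exp (u • -(P * Θ))‖ ≤ ‖Θ‖ := by
  open scoped MatrixOrder in
  set W := CFC.sqrt Θ
  have hWW : W * W = Θ := CFC.sqrt_mul_sqrt_self Θ hΘ.nonneg
  have hW : Wᴴ = W := (CFC.sqrt_nonneg Θ).posSemidef.isHermitian.eq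
  have hconj : Θ * exp (u • -(P * Θ)) = W * exp (u • -(W * P * W)) * W := by
    have h := mul_exp_mul_comm W (-(u • P) * W)
    rw [← hWW]
    simp only [mul_assoc, Matrix.neg_mul, Matrix.mul_neg, smul_neg, Matrix.smul_mul,
      Matrix.mul_smul] at h ⊢
    rw [h]
  have hWPW : (W * P * W).PosSemidef := by
    simpa only [hW] using hP.conjTranspose_mul_mul_same W
  calc ‖Θ * exp (u • -(P * Θ))‖ ≤ ‖W‖ * ‖exp (u • -(W * P * W))‖ * ‖W‖ := by
        rw [hconj]; exact (norm_mul_le _ _).trans (by gcongr; exact norm_mul_le _ _)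
    _ ≤ ‖W‖ * 1 * ‖W‖ := by gcongr; exact hWPW.norm_exp_neg_smul_le_one hu
    _ = ‖Θ‖ := by rw [mul_one, ← l2_opNorm_conjTranspose_mul_self, hW, hWW]

theorem PosSemidef.norm_exp_neg_smul_mul_le {P Θ : Matrix n n ℝ} (hP : P.PosSemidef)
    (hΘ : Θ.PosSemidef) {s : ℝ} (hs : 0 ≤ s) :
    ‖exp (s • -(P * Θ))‖ ≤ 1 + ‖P‖ * ‖Θ‖ * s := by
  have h : ‖exp (s • -(P * Θ)) - 1‖ ≤ ‖P‖ * ‖Θ‖ * s := norm_exp_smul_sub_one_le_s10 hs fun u hu ↦ by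
    rw [Matrix.neg_mul, norm_neg, mul_assoc]
    exact (norm_mul_le _ _).trans (by gcongr; exact hP.norm_mul_exp_neg_smul_mul_le hΘ hu.1)
  calc ‖exp (s • -(P * Θ))‖ ≤ ‖(1 : Matrix n n ℝ)‖ + ‖exp (s • -(P * Θ)) - 1‖ :=
        norm_le_norm_add_norm_sub' _ _
    _ ≤ 1 + ‖P‖ * ‖Θ‖ * s := add_le_add l2_opNorm_one_le h

theorem PosSemidef.norm_exp_neg_smul_mul_sub_le {P Q Θ : Matrix n n ℝ} (hP : P.PosSemidef)
    (hQ : Q.PosSemidef) (hΘ : Θ.PosSemidef) {t : ℝ} (ht : 0 ≤ t) :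
    ‖exp (-(t • (P * Θ))) - exp (-(t • (Q * Θ)))‖ ≤
      (1 + ‖P‖ * ‖Θ‖ * t) * (‖P - Q‖ * ‖Θ‖) * t := by
  simp only [← smul_neg]
  refine norm_exp_smul_sub_exp_smul_le ht (fun s hs ↦ ?_) fun s hs ↦ ?_
  · exact (hP.norm_exp_neg_smul_mul_le hΘ hs.1).trans (by gcongr; exact hs.2)
  · rw [neg_sub_neg, ← Matrix.sub_mul, mul_assoc, norm_sub_rev P Q]
    exact (norm_mul_le _ _).trans (by gcongr; exact hQ.norm_mul_exp_neg_smul_mul_le hΘ hs.1)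

end Matrix

theorem integrableOn_sqrt_inv_mul_exp_neg_mul_pow (k : ℕ) :
    IntegrableOn (fun t : ℝ ↦ (√t)⁻¹ * Real.exp (-t) * t ^ k) (Ioi 0) := by
  refine (Real.GammaIntegral_convergent (s := k + 1 / 2) (by positivity)).congr_fun
    (fun t (ht : 0 < t) ↦ ?_) measurableSet_Ioi
  rw [Real.sqrt_eq_rpow, ← Real.rpow_neg ht.le, ← Real.rpow_natCast, mul_right_comm,
    ← Real.rpow_add ht]
  ring_nf

section SqrtTransform

variable {n : Type*} [Fintype n] [DecidableEq n]

noncomputable def sqrtTransformIntegrand (Θ P : Matrix n n ℝ) (t : ℝ) : Matrix n n ℝ :=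
  ((√t)⁻¹ * Real.exp (-t)) • exp (-(t • (P * Θ)))

theorem continuousOn_sqrtTransformIntegrand (Θ P : Matrix n n ℝ) :
    ContinuousOn (sqrtTransformIntegrand Θ P) (Ioi 0) := by
  have hexp : Continuous fun t : ℝ ↦ exp (-(t • (P * Θ))) := by
    simp only [← smul_neg]
    exact continuous_iff_continuousAt.2 fun t ↦
      (hasDerivAt_exp_smul_const (𝕂 := ℝ) _ t).continuousAt
  have hw : ContinuousOn (fun t : ℝ ↦ (√t)⁻¹ * Real.exp (-t)) (Ioi 0) :=
    (Real.continuous_sqrt.continuousOn.inv₀ fun t (ht : 0 < t) ↦ (Real.sqrt_pos.2 ht).ne').mul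
      (by fun_prop)
  exact hw.smul hexp.continuousOn

theorem integrableOn_sqrtTransformIntegrand {Θ P : Matrix n n ℝ} (hP : P.PosSemidef)
    (hΘ : Θ.PosSemidef) : IntegrableOn (sqrtTransformIntegrand Θ P) (Ioi 0) := by
  refine Integrable.mono' ((integrableOn_sqrt_inv_mul_exp_neg_mul_pow 0).add
      ((integrableOn_sqrt_inv_mul_exp_neg_mul_pow 1).const_mul (‖P‖ * ‖Θ‖)))
    ((continuousOn_sqrtTransformIntegrand Θ P).aestronglyMeasurable measurableSet_Ioi)
    ((ae_restrict_iff' measurableSet_Ioi).2 (ae_of_all _ fun t (ht : 0 < t) ↦ ?_))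
  have hw : 0 ≤ (√t)⁻¹ * Real.exp (-t) := by positivity
  rw [sqrtTransformIntegrand, norm_smul, Real.norm_of_nonneg hw, ← smul_neg]
  calc (√t)⁻¹ * Real.exp (-t) * ‖exp (t • -(P * Θ))‖
      ≤ (√t)⁻¹ * Real.exp (-t) * (1 + ‖P‖ * ‖Θ‖ * t) := by
        gcongr; exact hP.norm_exp_neg_smul_mul_le hΘ ht.le
    _ = _ := by simp only [Pi.add_apply]; ring

theorem norm_sqrtTransformIntegrand_sub_le {Θ P Q : Matrix n n ℝ} (hP : P.PosSemidef)
    (hQ : Q.PosSemidef) (hΘ : Θ.PosSemidef) {t : ℝ} (ht : 0 < t) :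
    ‖sqrtTransformIntegrand Θ P t - sqrtTransformIntegrand Θ Q t‖ ≤
      ‖Θ‖ * (1 + ‖P‖ * ‖Θ‖) * ‖P - Q‖ *
        ((√t)⁻¹ * Real.exp (-t) * t ^ 1 + (√t)⁻¹ * Real.exp (-t) * t ^ 2) := by
  have hw : 0 ≤ (√t)⁻¹ * Real.exp (-t) := by positivity
  rw [sqrtTransformIntegrand, sqrtTransformIntegrand, ← smul_sub, norm_smul,
    Real.norm_of_nonneg hw]
  calc (√t)⁻¹ * Real.exp (-t) * ‖exp (-(t • (P * Θ))) - exp (-(t • (Q * Θ)))‖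
      ≤ (√t)⁻¹ * Real.exp (-t) * ((1 + ‖P‖ * ‖Θ‖ * t) * (‖P - Q‖ * ‖Θ‖) * t) := by
        gcongr; exact hP.norm_exp_neg_smul_mul_sub_le hQ hΘ ht.le
    _ ≤ (√t)⁻¹ * Real.exp (-t) * ((1 + ‖P‖ * ‖Θ‖) * (1 + t) * (‖P - Q‖ * ‖Θ‖) * t) := by
        gcongr
        nlinarith [mul_nonneg (norm_nonneg P) (norm_nonneg Θ)]
    _ = _ := by ring

theorem exists_norm_integral_sqrtTransformIntegrand_sub_le {Θ : Matrix n n ℝ}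
    (hΘ : Θ.PosSemidef) : ∃ K : ℝ, 0 ≤ K ∧ ∀ P Q : Matrix n n ℝ, P.PosSemidef → Q.PosSemidef →
      ‖(∫ t in Ioi 0, sqrtTransformIntegrand Θ P t) - ∫ t in Ioi 0, sqrtTransformIntegrand Θ Q t‖ ≤
        K * (‖Θ‖ * (1 + ‖P‖ * ‖Θ‖) * ‖P - Q‖) := by
  set g : ℝ → ℝ := fun t ↦ (√t)⁻¹ * Real.exp (-t) * t ^ 1 + (√t)⁻¹ * Real.exp (-t) * t ^ 2
  have hg : IntegrableOn g (Ioi 0) := (integrableOn_sqrt_inv_mul_exp_neg_mul_pow 1).add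
    (integrableOn_sqrt_inv_mul_exp_neg_mul_pow 2)
  refine ⟨∫ t in Ioi 0, g t, setIntegral_nonneg measurableSet_Ioi fun t (ht : 0 < t) ↦
    by positivity, fun P Q hP hQ ↦ ?_⟩
  rw [← integral_sub (integrableOn_sqrtTransformIntegrand hP hΘ)
    (integrableOn_sqrtTransformIntegrand hQ hΘ), mul_comm, ← integral_const_mul]
  exact norm_integral_le_of_norm_le (hg.const_mul _) ((ae_restrict_iff' measurableSet_Ioi).2
    (ae_of_all _ fun t ht ↦ norm_sqrtTransformIntegrand_sub_le hP hQ hΘ ht))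

end SqrtTransform

theorem mul_one_add_mul_le_two_mul {a θ : ℝ} (ha : 0 ≤ a) (hθ : 0 ≤ θ) :
    θ * (1 + a * θ) ≤ 2 * (1 + a ^ 2) * (1 + θ ^ 3) := by
  have hθ3 : θ + θ ^ 2 ≤ 1 + θ ^ 3 := by
    nlinarith [mul_nonneg (sq_nonneg (θ - 1)) (by linarith : 0 ≤ θ + 1)]
  have ha2 : 1 + a ≤ 2 * (1 + a ^ 2) := by nlinarith [sq_nonneg (a - 1)]
  calc θ * (1 + a * θ) ≤ (1 + a) * (θ + θ ^ 2) := by nlinarith [mul_nonneg ha hθ]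
    _ ≤ 2 * (1 + a ^ 2) * (1 + θ ^ 3) := mul_le_mul ha2 hθ3 (by positivity) (by positivity)

/-- Lipschitz-type estimate for the square-root transformation
`T(P) = (1/√π) ∫₀^∞ t^{-1/2} e^{-t} e^{-tPΘ} dt`: there is a constant `C` (depending
only on `Θ`) such that `‖T(P) - T(Q)‖ ≤ C (1 + ‖P‖² + ‖Q‖²)(1 + ‖Θ‖³) ‖P - Q‖` for all
symmetric positive semidefinite `P`, `Q`. -/
theorem stmt_10 {d q : ℕ} (H : Matrix (Fin q) (Fin d) ℝ)
    (R : Matrix (Fin q) (Fin q) ℝ) (hR : R.PosDef)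
    (Θ : Matrix (Fin d) (Fin d) ℝ) (hΘ : Θ = Hᵀ * R⁻¹ * H)
    (T : Matrix (Fin d) (Fin d) ℝ → Matrix (Fin d) (Fin d) ℝ)
    (hT : ∀ P, T P = (Real.sqrt Real.pi)⁻¹ •
      ∫ t in Set.Ioi (0 : ℝ),
        ((Real.sqrt t)⁻¹ * Real.exp (-t)) • exp (-(t • (P * Θ)))) :
    ∃ C : ℝ, ∀ P Q : Matrix (Fin d) (Fin d) ℝ, P.PosSemidef → Q.PosSemidef →
      ‖T P - T Q‖ ≤ C * (1 + ‖P‖ ^ 2 + ‖Q‖ ^ 2) * (1 + ‖Θ‖ ^ 3) * ‖P - Q‖ := by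
  have hΘpsd : Θ.PosSemidef := by
    simpa [hΘ] using hR.inv.posSemidef.conjTranspose_mul_mul_same H
  obtain ⟨K, hK, hbound⟩ := exists_norm_integral_sqrtTransformIntegrand_sub_le hΘpsd
  refine ⟨(√Real.pi)⁻¹ * K * 2, fun P Q hP hQ ↦ ?_⟩
  have hT' (P) : T P = (√Real.pi)⁻¹ • ∫ t in Ioi 0, sqrtTransformIntegrand Θ P t := hT P
  rw [hT', hT', ← smul_sub, norm_smul, Real.norm_of_nonneg (by positivity)]
  calc _ ≤ (√Real.pi)⁻¹ * (K * (‖Θ‖ * (1 + ‖P‖ * ‖Θ‖) * ‖P - Q‖)) := by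
        gcongr; exact hbound P Q hP hQ
    _ ≤ (√Real.pi)⁻¹ * (K * (2 * (1 + ‖P‖ ^ 2) * (1 + ‖Θ‖ ^ 3) * ‖P - Q‖)) := by
        gcongr _ * (_ * (?_ * _))
        exact mul_one_add_mul_le_two_mul (norm_nonneg _) (norm_nonneg _)
    _ ≤ (√Real.pi)⁻¹ * (K * (2 * (1 + ‖P‖ ^ 2 + ‖Q‖ ^ 2) * (1 + ‖Θ‖ ^ 3) * ‖P - Q‖)) := by
        gcongr _ * (_ * (_ * ?_ * _ * _))
        exact le_add_of_nonneg_right (sq_nonneg _)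
    _ = _ := by ring
end

section
/- Kalman gain difference identity: for symmetric positive semidefinite d×d matrices P, Q, with K(P) = P Hᵀ (R + H P Hᵀ)^{-1}, it holds that K(P) - K(Q) = (Id - K(P)H)(P - Q)Hᵀ(R + H Q Hᵀ)^{-1}. -/
open Matrix

section KalmanGain

variable {m n α : Type*} [Fintype m] [Fintype n] [DecidableEq m]

theorem Matrix.PosDef.isUnit_det_add_mul_mul_transpose {R : Matrix m m ℝ} (hR : R.PosDef)
    {P : Matrix n n ℝ} (hP : P.PosSemidef) (H : Matrix m n ℝ) :
    IsUnit (R + H * P * Hᵀ).det := by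
  have hHPH : (H * P * Hᵀ).PosSemidef := by
    simpa using hP.mul_mul_conjTranspose_same H
  exact (hR.add_posSemidef hHPH).det_pos.ne'.isUnit

/-- Writing `A = R + H P G` and `B = R + H Q G`, the identity reduces to
`H (P - Q) G = A - B`, after which `A⁻¹ (A - B) B⁻¹ = B⁻¹ - A⁻¹` telescopes. -/
theorem Matrix.gain_sub_gain [DecidableEq n] [CommRing α] (P Q : Matrix n n α) (H : Matrix m n α)
    (G : Matrix n m α) (R : Matrix m m α) (hA : IsUnit (R + H * P * G).det)
    (hB : IsUnit (R + H * Q * G).det) :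
    P * G * (R + H * P * G)⁻¹ - Q * G * (R + H * Q * G)⁻¹ =
      (1 - P * G * (R + H * P * G)⁻¹ * H) * (P - Q) * G * (R + H * Q * G)⁻¹ := by
  set A := R + H * P * G
  set B := R + H * Q * G
  have hdiff : H * (P - Q) * G = A - B := by
    simp only [A, B, Matrix.mul_sub, Matrix.sub_mul]
    abel
  have htelescope : A⁻¹ * (A - B) * B⁻¹ = B⁻¹ - A⁻¹ := by
    rw [Matrix.mul_sub, Matrix.sub_mul, nonsing_inv_mul A hA, Matrix.one_mul,
      Matrix.mul_assoc, mul_nonsing_inv B hB, Matrix.mul_one]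
  calc P * G * A⁻¹ - Q * G * B⁻¹
      = (P - Q) * G * B⁻¹ - P * G * (A⁻¹ * (A - B) * B⁻¹) := by
        rw [htelescope, Matrix.sub_mul, Matrix.sub_mul, Matrix.mul_sub]
        abel
    _ = (1 - P * G * A⁻¹ * H) * (P - Q) * G * B⁻¹ := by
        rw [← hdiff]
        simp only [Matrix.sub_mul, Matrix.one_mul, Matrix.mul_assoc]

end KalmanGain

/-- Kalman gain difference identity: with `K(P) = P Hᵀ (R + H P Hᵀ)⁻¹`,
`K(P) - K(Q) = (Id - K(P) H)(P - Q) Hᵀ (R + H Q Hᵀ)⁻¹`. -/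
theorem stmt_12 {d q : ℕ} (P Q : Matrix (Fin d) (Fin d) ℝ)
    (hP : P.PosSemidef) (hQ : Q.PosSemidef)
    (H : Matrix (Fin q) (Fin d) ℝ) (R : Matrix (Fin q) (Fin q) ℝ) (hR : R.PosDef) :
    P * Hᵀ * (R + H * P * Hᵀ)⁻¹ - Q * Hᵀ * (R + H * Q * Hᵀ)⁻¹ =
      (1 - (P * Hᵀ * (R + H * P * Hᵀ)⁻¹) * H) * (P - Q) * Hᵀ * (R + H * Q * Hᵀ)⁻¹ :=
  gain_sub_gain P Q H Hᵀ R (hR.isUnit_det_add_mul_mul_transpose hP H)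
    (hR.isUnit_det_add_mul_mul_transpose hQ H)
end

section
/- Empirical covariance difference bound: let X₁,...,X_M and Y₁,...,Y_M be vectors in ℝ^d with empirical means x̄ = (1/M)ΣXᵢ, ȳ = (1/M)ΣYᵢ and empirical covariances P = (1/(M-1))Σ(Xᵢ-x̄)(Xᵢ-x̄)ᵀ, P̄ = (1/(M-1))Σ(Yᵢ-ȳ)(Yᵢ-ȳ)ᵀ. Then ‖P - P̄‖ ≤ 2√(M/(M-1)) (tr(P)^{1/2} + tr(P̄)^{1/2}) ((1/M)Σᵢ‖Xᵢ-Yᵢ‖²)^{1/2} in spectral norm. -/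
/-!
With `aᵢ = Xᵢ - x̄` and `bᵢ = Yᵢ - ȳ`, each `aᵢaᵢᵀ - bᵢbᵢᵀ = aᵢ(aᵢ - bᵢ)ᵀ + (aᵢ - bᵢ)bᵢᵀ` is a sum
of two rank-one matrices, of spectral norms `‖aᵢ‖‖aᵢ - bᵢ‖` and `‖aᵢ - bᵢ‖‖bᵢ‖`. Cauchy–Schwarz
over `i` bounds `‖P - P̄‖` by `(tr(P)^{1/2} + tr(P̄)^{1/2}) ((M-1)⁻¹ Σᵢ ‖aᵢ - bᵢ‖²)^{1/2}`, and
since `aᵢ - bᵢ` is `Xᵢ - Yᵢ` minus its mean, centering only decreases `Σᵢ ‖aᵢ - bᵢ‖²`.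
-/

open Matrix Finset
open scoped Matrix.Norms.L2Operator

theorem Matrix.l2_opNorm_vecMulVec {𝕜 m n : Type*} [RCLike 𝕜] [Fintype m] [Fintype n]
    [DecidableEq n] (x : EuclideanSpace 𝕜 m) (y : EuclideanSpace 𝕜 n) :
    ‖vecMulVec (⇑x) (star ⇑y)‖ = ‖x‖ * ‖y‖ := by
  rw [← InnerProductSpace.symm_toEuclideanLin_rankOne, l2_opNorm_def, LinearEquiv.trans_apply,
    LinearEquiv.apply_symm_apply]
  exact InnerProductSpace.norm_rankOne x y

theorem Matrix.l2_opNorm_vecMulVec_real {m n : Type*} [Fintype m] [Fintype n]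
    [DecidableEq n] (x : EuclideanSpace ℝ m) (y : EuclideanSpace ℝ n) :
    ‖vecMulVec ⇑x ⇑y‖ = ‖x‖ * ‖y‖ := by
  simpa using l2_opNorm_vecMulVec x y

theorem norm_sum_vecMulVec_sub_le {ι n : Type*} [Fintype ι] [Fintype n] [DecidableEq n]
    (a b : ι → EuclideanSpace ℝ n) :
    ‖∑ i, (vecMulVec ⇑(a i) ⇑(a i) - vecMulVec ⇑(b i) ⇑(b i))‖ ≤
      (√(∑ i, ‖a i‖ ^ 2) + √(∑ i, ‖b i‖ ^ 2)) * √(∑ i, ‖a i - b i‖ ^ 2) := by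
  have hsplit : ∀ i, vecMulVec ⇑(a i) ⇑(a i) - vecMulVec ⇑(b i) ⇑(b i) =
      vecMulVec ⇑(a i) ⇑(a i - b i) + vecMulVec ⇑(a i - b i) ⇑(b i) := fun i => by
    simp only [WithLp.ofLp_sub, vecMulVec_sub, sub_vecMulVec]; abel
  calc ‖∑ i, (vecMulVec ⇑(a i) ⇑(a i) - vecMulVec ⇑(b i) ⇑(b i))‖
      ≤ ∑ i, (‖a i‖ * ‖a i - b i‖ + ‖b i‖ * ‖a i - b i‖) := by
        simp_rw [hsplit]
        refine (norm_sum_le _ _).trans (sum_le_sum fun i _ => (norm_add_le _ _).trans ?_)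
        rw [l2_opNorm_vecMulVec_real, l2_opNorm_vecMulVec_real, mul_comm ‖a i - b i‖]
    _ ≤ _ := by
        rw [sum_add_distrib, add_mul]
        gcongr <;> exact Real.sum_mul_le_sqrt_mul_sqrt _ _ _

theorem norm_smul_sum_vecMulVec_sub_le {ι n : Type*} [Fintype ι] [Fintype n] [DecidableEq n]
    {c : ℝ} (hc : 0 ≤ c) (a b : ι → EuclideanSpace ℝ n) :
    ‖c • ∑ i, (vecMulVec ⇑(a i) ⇑(a i) - vecMulVec ⇑(b i) ⇑(b i))‖ ≤
      (√(c * ∑ i, ‖a i‖ ^ 2) + √(c * ∑ i, ‖b i‖ ^ 2)) * √(c * ∑ i, ‖a i - b i‖ ^ 2) := by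
  have hc' : c = √c * √c := (Real.mul_self_sqrt hc).symm
  simp_rw [Real.sqrt_mul hc, norm_smul, Real.norm_of_nonneg hc]
  calc c * _
      ≤ √c * √c * ((√(∑ i, ‖a i‖ ^ 2) + √(∑ i, ‖b i‖ ^ 2)) * √(∑ i, ‖a i - b i‖ ^ 2)) := by
        rw [← hc']; gcongr; exact norm_sum_vecMulVec_sub_le a b
    _ = _ := by ring

theorem sum_norm_sub_mean_sq {ι E : Type*} [Fintype ι] [NormedAddCommGroup E]
    [InnerProductSpace ℝ E] (z : ι → E) :
    ∑ i, ‖z i - (Fintype.card ι : ℝ)⁻¹ • ∑ j, z j‖ ^ 2 =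
      ∑ i, ‖z i‖ ^ 2 - (Fintype.card ι : ℝ)⁻¹ * ‖∑ i, z i‖ ^ 2 := by
  simp_rw [norm_sub_sq_real, sum_add_distrib, sum_sub_distrib, ← mul_sum, ← sum_inner,
    real_inner_smul_right, real_inner_self_eq_norm_sq, norm_smul, sum_const, card_univ,
    nsmul_eq_mul, Real.norm_eq_abs, abs_inv, Nat.abs_cast]
  rcases eq_or_ne (Fintype.card ι : ℝ) 0 with h | h
  · simp [h]
  · field_simp; ring

theorem sum_norm_sub_mean_sq_le {ι E : Type*} [Fintype ι] [NormedAddCommGroup E]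
    [InnerProductSpace ℝ E] (z : ι → E) :
    ∑ i, ‖z i - (Fintype.card ι : ℝ)⁻¹ • ∑ j, z j‖ ^ 2 ≤ ∑ i, ‖z i‖ ^ 2 := by
  rw [sum_norm_sub_mean_sq]
  exact sub_le_self _ (by positivity)

theorem trace_vecMulVec_self {n : Type*} [Fintype n] (u : EuclideanSpace ℝ n) :
    trace (vecMulVec ⇑u ⇑u) = ‖u‖ ^ 2 := by
  rw [trace_vecMulVec, ← real_inner_self_eq_norm_sq, EuclideanSpace.inner_eq_star_dotProduct]
  simp

/-- Empirical covariance difference bound: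
`‖P - P̄‖ ≤ 2 √(M/(M-1)) (tr(P)^{1/2} + tr(P̄)^{1/2}) ((1/M) Σᵢ ‖Xᵢ - Yᵢ‖²)^{1/2}`. -/
theorem stmt_17 {d M : ℕ} (hM : 2 ≤ M)
    (X Y : Fin M → EuclideanSpace ℝ (Fin d))
    (xbar ybar : EuclideanSpace ℝ (Fin d))
    (hx : xbar = (M : ℝ)⁻¹ • ∑ i, X i) (hy : ybar = (M : ℝ)⁻¹ • ∑ i, Y i)
    (P Pbar : Matrix (Fin d) (Fin d) ℝ)
    (hP : P = ((M : ℝ) - 1)⁻¹ •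
      ∑ i, Matrix.of fun k l => (X i k - xbar k) * (X i l - xbar l))
    (hPbar : Pbar = ((M : ℝ) - 1)⁻¹ •
      ∑ i, Matrix.of fun k l => (Y i k - ybar k) * (Y i l - ybar l)) :
    ‖P - Pbar‖ ≤
      2 * Real.sqrt ((M : ℝ) / ((M : ℝ) - 1)) *
        (Real.sqrt P.trace + Real.sqrt Pbar.trace) *
        Real.sqrt ((M : ℝ)⁻¹ * ∑ i, ‖X i - Y i‖ ^ 2) := by
  have hM1 : (0 : ℝ) < M - 1 := by
    have : (2 : ℝ) ≤ M := by exact_mod_cast hM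
    linarith
  have hscatter : ∀ (Z : Fin M → EuclideanSpace ℝ (Fin d)) (z : EuclideanSpace ℝ (Fin d)),
      (∑ i, Matrix.of fun k l => (Z i k - z k) * (Z i l - z l)) =
        ∑ i, vecMulVec ⇑(Z i - z) ⇑(Z i - z) := fun _ _ => rfl
  rw [hscatter] at hP hPbar
  set c := ((M : ℝ) - 1)⁻¹
  have hc : 0 ≤ c := inv_nonneg.mpr hM1.le
  have htrP : P.trace = c * ∑ i, ‖X i - xbar‖ ^ 2 := by
    simp only [hP, trace_smul, trace_sum, trace_vecMulVec_self, smul_eq_mul]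
  have htrPbar : Pbar.trace = c * ∑ i, ‖Y i - ybar‖ ^ 2 := by
    simp only [hPbar, trace_smul, trace_sum, trace_vecMulVec_self, smul_eq_mul]
  have hcenter : ∑ i, ‖(X i - xbar) - (Y i - ybar)‖ ^ 2 ≤ ∑ i, ‖X i - Y i‖ ^ 2 := by
    have hmean : xbar - ybar = (Fintype.card (Fin M) : ℝ)⁻¹ • ∑ i, (X i - Y i) := by
      rw [Fintype.card_fin, hx, hy, ← smul_sub, sum_sub_distrib]
    have hcentered : ∀ i, (X i - xbar) - (Y i - ybar) =
        (X i - Y i) - (Fintype.card (Fin M) : ℝ)⁻¹ • ∑ j, (X j - Y j) := fun i => by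
      rw [sub_sub_sub_comm, hmean]
    simp_rw [hcentered]
    exact sum_norm_sub_mean_sq_le fun i => X i - Y i
  have hscale :
      c * ∑ i, ‖X i - Y i‖ ^ 2 = M / (M - 1) * ((M : ℝ)⁻¹ * ∑ i, ‖X i - Y i‖ ^ 2) := by
    have : (M : ℝ) ≠ 0 := by positivity
    simp only [c]
    field_simp
  calc ‖P - Pbar‖
      ≤ (√P.trace + √Pbar.trace) * √(c * ∑ i, ‖(X i - xbar) - (Y i - ybar)‖ ^ 2) := by
        rw [htrP, htrPbar, hP, hPbar, ← smul_sub, ← sum_sub_distrib]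
        exact norm_smul_sum_vecMulVec_sub_le hc _ _
    _ ≤ (√P.trace + √Pbar.trace) * √(c * ∑ i, ‖X i - Y i‖ ^ 2) := by gcongr
    _ = 1 * √(M / (M - 1)) * (√P.trace + √Pbar.trace) *
          √((M : ℝ)⁻¹ * ∑ i, ‖X i - Y i‖ ^ 2) := by
        rw [hscale, Real.sqrt_mul (by positivity)]; ring
    _ ≤ _ := by gcongr; norm_num
end
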